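/- Let U be a finite set, W ⊆ U with |W| = k, and f : U → {1,…,k} a coloring such that W intersects exactly ℓ color classes, where for each color i the set W ∩ f⁻¹(i) has size cᵢ. Suppose each color class A_i = f⁻¹(i) ∩ A (for some A ⊇ W) is independently partitioned uniformly at random into two parts of sizes differing by at most 1. Then the probability that, for every color i, all elements of W of color i lie in the same part, is at most (1/2)^(k−ℓ). -/

import Mathlib

/-!
Colour classes are partitioned independently, so the ratio is a product over colours, and it
suffices to show that for a class of size `a` containing `c ≥ 1` points of `W` and a balanced part
size `s`, at most a `2^(1-c)` fraction of the `s`-subsets contain `W` or avoid it. Those subsets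
number `C(a-c, a-s) + C(a-c, s)`, which equals `C(a, s)` for `c = 1`; moving one more point into
`W` at least halves this sum, by Pascal's rule and the unimodality of binomial coefficients.
-/

open Finset

namespace Nat

theorem choose_succ_le_of_le_two_mul_add_one {n k : ℕ} (h : n ≤ 2 * k + 1) :
    n.choose (k + 1) ≤ n.choose k :=
  Nat.le_of_mul_le_mul_right
    ((choose_succ_right_eq n k).trans_le (Nat.mul_le_mul_left _ (by omega))) k.succ_pos

theorem choose_le_choose_of_le_of_le_two_mul_add_one {n i j : ℕ} (hji : j ≤ i)
    (hn : n ≤ 2 * j + 1) : n.choose i ≤ n.choose j := by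
  induction i, hji using Nat.le_induction with
  | base => rfl
  | succ i hji ih => exact (choose_succ_le_of_le_two_mul_add_one (by omega)).trans ih

theorem choose_add_choose_eq_of_add_eq_succ {n s t : ℕ} (hst : s + t = n + 1) :
    n.choose s + n.choose t = (n + 1).choose s := by
  rcases s with _ | s
  · rw [choose_eq_zero_of_lt (show n < t by omega)]
    simp
  · rw [choose_symm_of_eq_add (show n = t + s by omega), choose_succ_succ', add_comm]

theorem two_mul_choose_add_choose_le {n s t : ℕ} (hst : n ≤ s + t) (hs : s ≤ t + 1)
    (ht : t ≤ s + 1) :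
    2 * (n.choose (s + 1) + n.choose (t + 1)) ≤
      (n + 1).choose (s + 1) + (n + 1).choose (t + 1) := by
  have h₁ : n.choose (s + 1) ≤ n.choose t :=
    choose_le_choose_of_le_of_le_two_mul_add_one ht (by omega)
  have h₂ : n.choose (t + 1) ≤ n.choose s :=
    choose_le_choose_of_le_of_le_two_mul_add_one hs (by omega)
  rw [choose_succ_succ', choose_succ_succ']
  omega

theorem two_pow_mul_choose_add_choose_le {n c s t : ℕ} (hst : s + t = n + c + 1)
    (hs : s ≤ t + 1) (ht : t ≤ s + 1) :
    2 ^ c * (n.choose s + n.choose t) ≤ (n + c + 1).choose s := by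
  induction c generalizing n with
  | zero => simpa using (choose_add_choose_eq_of_add_eq_succ hst).le
  | succ c ih =>
    obtain ⟨s, rfl⟩ : ∃ s', s = s' + 1 := ⟨s - 1, by omega⟩
    obtain ⟨t, rfl⟩ : ∃ t', t = t' + 1 := ⟨t - 1, by omega⟩
    calc 2 ^ (c + 1) * (n.choose (s + 1) + n.choose (t + 1))
        = 2 ^ c * (2 * (n.choose (s + 1) + n.choose (t + 1))) := by ring
      _ ≤ 2 ^ c * ((n + 1).choose (s + 1) + (n + 1).choose (t + 1)) :=
        Nat.mul_le_mul_left _ (two_mul_choose_add_choose_le (by omega) (by omega) (by omega))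
      _ ≤ (n + 1 + c + 1).choose (s + 1) := ih (by omega)
      _ = (n + (c + 1) + 1).choose (s + 1) := by rw [show n + 1 + c = n + (c + 1) by omega]

end Nat

namespace Finset

variable {α : Type*}

theorem card_filter_card_mem_and (A : Finset α) (D : Finset ℕ) (P : Finset α → Prop)
    [DecidablePred P] :
    #{S ∈ A.powerset | #S ∈ D ∧ P S} = ∑ s ∈ D, #{S ∈ A.powersetCard s | P S} := by
  rw [card_eq_sum_card_fiberwise (f := card) (t := D) (fun S hS => (mem_filter.1 hS).2.1)]
  refine sum_congr rfl fun s hs => congrArg card ?_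
  ext S
  simp only [mem_filter, mem_powerset, mem_powersetCard]
  constructor
  · rintro ⟨⟨hA, -, hP⟩, rfl⟩; exact ⟨⟨hA, rfl⟩, hP⟩
  · rintro ⟨⟨hA, rfl⟩, hP⟩; exact ⟨⟨hA, hs, hP⟩, rfl⟩

theorem sum_card_fiber_sub_one_add_card_filter_exists {ι : Type*} [Fintype ι] [DecidableEq ι]
    (W : Finset α) (f : α → ι) :
    ∑ i, (#{w ∈ W | f w = i} - 1) + #{i | ∃ w ∈ W, f w = i} = #W := by
  rw [card_eq_sum_card_fiberwise (f := f) (t := univ) fun _ _ => mem_univ _, card_filter,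
    ← sum_add_distrib]
  refine sum_congr rfl fun i _ => ?_
  split_ifs with h
  · have : 0 < #{w ∈ W | f w = i} := card_pos.2 (filter_nonempty_iff.2 h)
    omega
  · simp only [not_exists, not_and] at h
    simp [filter_eq_empty_iff.2 h]

variable [DecidableEq α] {A W : Finset α}

theorem card_filter_disjoint_powersetCard (s : ℕ) :
    #{S ∈ A.powersetCard s | Disjoint W S} = (#(A \ W)).choose s := by
  rw [← card_powersetCard]
  congr 1
  ext S
  simp only [mem_filter, mem_powersetCard, subset_sdiff, disjoint_comm]
  tauto

theorem card_filter_subset_powersetCard (hWA : W ⊆ A) {s : ℕ} (hs : s ≤ #A) :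
    #{S ∈ A.powersetCard s | W ⊆ S} = (#(A \ W)).choose (#A - s) := by
  rw [← card_filter_disjoint_powersetCard]
  refine card_nbij' (A \ ·) (A \ ·) ?_ ?_ ?_ ?_
  · intro S hS
    simp only [mem_coe, mem_filter, mem_powersetCard] at hS ⊢
    exact ⟨⟨sdiff_subset, by rw [card_sdiff_of_subset hS.1.1, hS.1.2]⟩,
      disjoint_sdiff.mono_left hS.2⟩
  · intro T hT
    simp only [mem_coe, mem_filter, mem_powersetCard] at hT ⊢
    exact ⟨⟨sdiff_subset, by rw [card_sdiff_of_subset hT.1.1, hT.1.2]; omega⟩,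
      subset_sdiff.2 ⟨hWA, hT.2⟩⟩
  · intro S hS
    exact sdiff_sdiff_eq_self (mem_powersetCard.1 (mem_filter.1 hS).1).1
  · intro T hT
    exact sdiff_sdiff_eq_self (mem_powersetCard.1 (mem_filter.1 hT).1).1

theorem two_pow_mul_card_filter_subset_or_disjoint_powersetCard_le (hWA : W ⊆ A) {s : ℕ}
    (hs : 2 * s ≤ #A + 1) (hs' : #A ≤ 2 * s + 1) :
    2 ^ (#W - 1) * #{S ∈ A.powersetCard s | W ⊆ S ∨ Disjoint W S} ≤ (#A).choose s := by
  obtain rfl | hW := W.eq_empty_or_nonempty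
  · simp
  have hdisj : Disjoint {S ∈ A.powersetCard s | W ⊆ S} {S ∈ A.powersetCard s | Disjoint W S} :=
    disjoint_filter.2 fun S _ hsub hdisj => hW.ne_empty (hdisj.eq_bot_of_le hsub)
  have hcard : #(A \ W) + (#W - 1) + 1 = #A := by
    have := card_le_card hWA
    have := hW.card_pos
    rw [card_sdiff_of_subset hWA]
    omega
  rw [filter_or, card_union_of_disjoint hdisj, card_filter_subset_powersetCard hWA (by omega),
    card_filter_disjoint_powersetCard, add_comm, ← hcard]
  rw [← hcard] at hs hs'
  exact Nat.two_pow_mul_choose_add_choose_le (by omega) (by omega) (by omega)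

theorem two_pow_mul_card_filter_balanced_subset_or_disjoint_le (hWA : W ⊆ A) :
    2 ^ (#W - 1) * #{S ∈ A.powerset |
        (#S = #A / 2 ∨ #S = #A - #A / 2) ∧ (W ⊆ S ∨ Disjoint W S)}
      ≤ #{S ∈ A.powerset | #S = #A / 2 ∨ #S = #A - #A / 2} := by
  have hD : ∀ S : Finset α,
      (#S = #A / 2 ∨ #S = #A - #A / 2) ↔ #S ∈ ({#A / 2, #A - #A / 2} : Finset ℕ) := by
    simp
  have key := card_filter_card_mem_and A {#A / 2, #A - #A / 2} (fun _ => True)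
  simp only [and_true, filter_true, card_powersetCard] at key
  simp_rw [hD, card_filter_card_mem_and, key, mul_sum]
  refine sum_le_sum fun s hs => two_pow_mul_card_filter_subset_or_disjoint_powersetCard_le hWA ?_ ?_
  all_goals simp only [mem_insert, mem_singleton] at hs; omega

theorem card_filter_balanced_subset_or_disjoint_div_le (hWA : W ⊆ A) :
    (#{S ∈ A.powerset | (#S = #A / 2 ∨ #S = #A - #A / 2) ∧ (W ⊆ S ∨ Disjoint W S)} : ℝ) /
        #{S ∈ A.powerset | #S = #A / 2 ∨ #S = #A - #A / 2}
      ≤ (1 / 2) ^ (#W - 1) := by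
  refine div_le_of_le_mul₀ (Nat.cast_nonneg _) (by positivity) ?_
  rw [one_div, inv_pow, inv_mul_eq_div, le_div_iff₀ (by positivity), mul_comm]
  exact_mod_cast two_pow_mul_card_filter_balanced_subset_or_disjoint_le hWA

end Finset

theorem stmt_0_general {U : Type*} [DecidableEq U] (k ℓ : ℕ) (f : U → Fin k)
    (W A : Finset U) (hWA : W ⊆ A) (hWcard : W.card = k)
    (hℓ : (Finset.univ.filter fun i : Fin k => ∃ w ∈ W, f w = i).card = ℓ) :
    ((∏ i : Fin k,
        (((A.filter fun u => f u = i).powerset.filter fun S =>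
          (S.card = (A.filter fun u => f u = i).card / 2 ∨
            S.card = (A.filter fun u => f u = i).card - (A.filter fun u => f u = i).card / 2) ∧
          ((W.filter fun u => f u = i) ⊆ S ∨ Disjoint (W.filter fun u => f u = i) S)).card : ℝ)) /
      ∏ i : Fin k,
        (((A.filter fun u => f u = i).powerset.filter fun S =>
          S.card = (A.filter fun u => f u = i).card / 2 ∨
            S.card = (A.filter fun u => f u = i).card - (A.filter fun u => f u = i).card / 2).card : ℝ))
      ≤ ((1 : ℝ) / 2) ^ (k - ℓ) := by
  have hexp : ∑ i, (#{w ∈ W | f w = i} - 1) = k - ℓ := by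
    have := sum_card_fiber_sub_one_add_card_filter_exists W f
    omega
  rw [← prod_div_distrib, ← hexp, ← prod_pow_eq_pow_sum]
  exact prod_le_prod (fun i _ => by positivity) fun i _ =>
    card_filter_balanced_subset_or_disjoint_div_le (filter_subset_filter _ hWA)

/-- Let W ⊆ A ⊆ U with |W| = k, f : U → Fin k a colouring, and suppose W
intersects exactly ℓ colour classes.  Each colour class Aᵢ = A ∩ f⁻¹(i) is independently
partitioned uniformly at random into two parts (Xᵢ, Aᵢ \ Xᵢ) whose sizes differ by at most 1
(so |Xᵢ| ∈ {⌊|Aᵢ|/2⌋, ⌈|Aᵢ|/2⌉}).  The probability that, for every colour i, all elements of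
W of colour i lie in the same part — which by independence and uniformity equals the ratio of
the number of favourable tuples of parts to the total number of tuples of parts — is at most
(1/2)^(k−ℓ). -/
theorem stmt_0 {U : Type*} [Fintype U] [DecidableEq U] (k ℓ : ℕ) (f : U → Fin k)
    (W A : Finset U) (hWA : W ⊆ A) (hWcard : W.card = k)
    (hℓ : (Finset.univ.filter fun i : Fin k => ∃ w ∈ W, f w = i).card = ℓ) :
    ((∏ i : Fin k,
        (((A.filter fun u => f u = i).powerset.filter fun S =>
          (S.card = (A.filter fun u => f u = i).card / 2 ∨
            S.card = (A.filter fun u => f u = i).card - (A.filter fun u => f u = i).card / 2) ∧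
          ((W.filter fun u => f u = i) ⊆ S ∨ Disjoint (W.filter fun u => f u = i) S)).card : ℝ)) /
      ∏ i : Fin k,
        (((A.filter fun u => f u = i).powerset.filter fun S =>
          S.card = (A.filter fun u => f u = i).card / 2 ∨
            S.card = (A.filter fun u => f u = i).card - (A.filter fun u => f u = i).card / 2).card : ℝ))
      ≤ ((1 : ℝ) / 2) ^ (k - ℓ) :=
  stmt_0_general k ℓ f W A hWA hWcard hℓ
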